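/- arXiv:2009.12848 — 2 statements merged into one kernel-verified Lean document; each statement's English description precedes it below -/
import Mathlib

section
/- Let λ, μ ∈ (0,∞) and T > 0. For all a, b, c, d ∈ [0,1] with a < b and c < d, one has the strict rearrangement inequality I_{1,T}(a,c) + I_{1,T}(b,d) < I_{1,T}(a,d) + I_{1,T}(b,c). -/
/-!
With `Λ_p(v) = log (1 - p + eᵛ p)` the cumulant generating function of a Bernoulli(`p`) variable,
`J_{t,v}(u) = u Λ_P(v) + (1 - u) Λ_Q(v)` where `Q = p01(t) < P = p11(t)`, and `g = Λ_P - Λ_Q` is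
strictly increasing. Exchanging the slopes `c, d` or the weights `a, b` between the objectives at
two points `v₁, v₂` changes the sum by `(v₁ - v₂)(d - c)` or by `(b - a)(g v₂ - g v₁)`; one of the
two is nonnegative, which gives the weak inequality. For strictness, shrink `[c, d]` into `(0, 1)`,
where both suprema on the left are attained. If the maximisers differ, one exchange gains strictly;
if they coincide at `v`, then `∂ᵥJ(v) = c`, so `v` does not maximise the objective of slope `d`.
-/

noncomputable section

open MeasureTheory Real Filter

/-- Probability that an initially inactive edge is active at time `t`. -/
def p01 (lam mu t : ℝ) : ℝ := (lam - lam * Real.exp (-(t * (lam + mu)))) / (lam + mu)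

/-- Probability that an initially active edge is active at time `t`. -/
def p11 (lam mu t : ℝ) : ℝ := (lam + mu * Real.exp (-(t * (lam + mu)))) / (lam + mu)

/-- The cumulant-type function `J_{t,v}(u)`. -/
def Jfun (lam mu t v u : ℝ) : ℝ :=
  u * Real.log (1 - p11 lam mu t + Real.exp v * p11 lam mu t) +
  (1 - u) * Real.log (1 - p01 lam mu t + Real.exp v * p01 lam mu t)

/-- The one-step rate function `I_{1,t}(u,x) = sup_v [v x - J_{t,v}(u)]`. -/
def I1 (lam mu t u x : ℝ) : ℝ := ⨆ v : ℝ, (v * x - Jfun lam mu t v u)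

open Set

def bernoulliCGF (p v : ℝ) : ℝ := log (1 - p + exp v * p)

def tiltedMean (p v : ℝ) : ℝ := exp v * p / (1 - p + exp v * p)

section Bernoulli

variable {p : ℝ}

lemma one_sub_add_exp_mul_pos (hp : p ∈ Ioo 0 1) (v : ℝ) : 0 < 1 - p + exp v * p := by
  have := mul_pos (exp_pos v) hp.1
  linarith [hp.2]

lemma hasDerivAt_bernoulliCGF (hp : p ∈ Ioo 0 1) (v : ℝ) :
    HasDerivAt (bernoulliCGF p) (tiltedMean p v) v :=
  (((hasDerivAt_exp v).mul_const p).const_add (1 - p)).log (one_sub_add_exp_mul_pos hp v).ne'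

lemma add_log_le_bernoulliCGF (hp : p ∈ Ioo 0 1) (v : ℝ) : v + log p ≤ bernoulliCGF p v := by
  rw [← log_exp v, ← log_mul (exp_pos v).ne' hp.1.ne', log_exp]
  exact log_le_log (mul_pos (exp_pos v) hp.1) (by linarith [hp.2])

lemma log_one_sub_le_bernoulliCGF (hp : p ∈ Ioo 0 1) (v : ℝ) :
    log (1 - p) ≤ bernoulliCGF p v :=
  log_le_log (by linarith [hp.2]) (by linarith [mul_pos (exp_pos v) hp.1])

end Bernoulli

lemma tiltedMean_lt_tiltedMean {p q : ℝ} (hq : q ∈ Ioo 0 1) (hp : p ∈ Ioo 0 1) (hqp : q < p)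
    (v : ℝ) : tiltedMean q v < tiltedMean p v := by
  rw [tiltedMean, tiltedMean, div_lt_div_iff₀ (one_sub_add_exp_mul_pos hq v)
    (one_sub_add_exp_mul_pos hp v)]
  have := exp_pos v
  nlinarith [mul_pos this (sub_pos.2 hqp)]

lemma strictMono_bernoulliCGF_sub {p q : ℝ} (hq : q ∈ Ioo 0 1) (hp : p ∈ Ioo 0 1) (hqp : q < p) :
    StrictMono fun v => bernoulliCGF p v - bernoulliCGF q v :=
  strictMono_of_hasDerivAt_pos
    (fun v => (hasDerivAt_bernoulliCGF hp v).sub (hasDerivAt_bernoulliCGF hq v))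
    fun v => sub_pos.2 (tiltedMean_lt_tiltedMean hq hp hqp v)

def mixedCGF (p q u v : ℝ) : ℝ := u * bernoulliCGF p v + (1 - u) * bernoulliCGF q v

def dualObjective (p q u x v : ℝ) : ℝ := v * x - mixedCGF p q u v

def rate (p q u x : ℝ) : ℝ := ⨆ v, dualObjective p q u x v

lemma dualObjective_exchange_u (p q a b c d v w : ℝ) :
    dualObjective p q a c v + dualObjective p q b d w =
      dualObjective p q a d w + dualObjective p q b c v +
        (b - a) * ((bernoulliCGF p v - bernoulliCGF q v) - (bernoulliCGF p w - bernoulliCGF q w)) := by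
  simp only [dualObjective, mixedCGF]
  ring

lemma dualObjective_exchange_x (p q a b c d v w : ℝ) :
    dualObjective p q a c v + dualObjective p q b d w =
      dualObjective p q a d v + dualObjective p q b c w - (v - w) * (d - c) := by
  simp only [dualObjective]
  ring

section Rate

variable {p q u x : ℝ} (hp : p ∈ Ioo 0 1) (hq : q ∈ Ioo 0 1)
include hp hq

lemma hasDerivAt_dualObjective (v : ℝ) :
    HasDerivAt (dualObjective p q u x)
      (x - (u * tiltedMean p v + (1 - u) * tiltedMean q v)) v := by
  have hJ := ((hasDerivAt_bernoulliCGF hp v).const_mul u).add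
    ((hasDerivAt_bernoulliCGF hq v).const_mul (1 - u))
  exact (hasDerivAt_mul_const x).sub hJ

lemma dualObjective_le_of_mem_Icc (hu : u ∈ Icc 0 1) (v : ℝ) :
    dualObjective p q u x v ≤ v * (x - 1) - (u * log p + (1 - u) * log q) ∧
      dualObjective p q u x v ≤ v * x - (u * log (1 - p) + (1 - u) * log (1 - q)) := by
  have hu' : 0 ≤ 1 - u := sub_nonneg.2 hu.2
  have h₁ := mul_le_mul_of_nonneg_left (add_log_le_bernoulliCGF hp v) hu.1
  have h₂ := mul_le_mul_of_nonneg_left (add_log_le_bernoulliCGF hq v) hu'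
  have h₃ := mul_le_mul_of_nonneg_left (log_one_sub_le_bernoulliCGF hp v) hu.1
  have h₄ := mul_le_mul_of_nonneg_left (log_one_sub_le_bernoulliCGF hq v) hu'
  constructor <;> · simp only [dualObjective, mixedCGF]; nlinarith

lemma bddAbove_range_dualObjective (hu : u ∈ Icc 0 1) (hx : x ∈ Icc 0 1) :
    BddAbove (range (dualObjective p q u x)) := by
  refine ⟨max (-(u * log p + (1 - u) * log q)) (-(u * log (1 - p) + (1 - u) * log (1 - q))), ?_⟩
  rintro _ ⟨v, rfl⟩
  obtain ⟨h₁, h₂⟩ := dualObjective_le_of_mem_Icc (x := x) hp hq hu v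
  rcases le_total 0 v with hv | hv
  · exact le_max_of_le_left (by nlinarith [hx.2])
  · exact le_max_of_le_right (by nlinarith [hx.1])

lemma tendsto_dualObjective_cocompact (hu : u ∈ Icc 0 1) (hx : x ∈ Ioo 0 1) :
    Tendsto (dualObjective p q u x) (cocompact ℝ) atBot := by
  rw [cocompact_eq_atBot_atTop, tendsto_sup]
  constructor
  · refine tendsto_atBot_mono (fun v => (dualObjective_le_of_mem_Icc hp hq hu v).2) ?_
    exact tendsto_atBot_add_const_right _ _ (tendsto_id.atBot_mul_const hx.1)
  · refine tendsto_atBot_mono (fun v => (dualObjective_le_of_mem_Icc hp hq hu v).1) ?_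
    exact tendsto_atBot_add_const_right _ _
      (tendsto_id.atTop_mul_const_of_neg (sub_neg.2 hx.2))

lemma exists_dualObjective_eq_rate (hu : u ∈ Icc 0 1) (hx : x ∈ Ioo 0 1) :
    ∃ v, dualObjective p q u x v = rate p q u x := by
  have hcont : Continuous (dualObjective p q u x) :=
    continuous_iff_continuousAt.2 fun v => (hasDerivAt_dualObjective hp hq v).continuousAt
  obtain ⟨v, hv⟩ := hcont.exists_forall_ge (tendsto_dualObjective_cocompact hp hq hu hx)
  exact ⟨v, le_antisymm (le_ciSup ⟨_, forall_mem_range.2 hv⟩ v) (ciSup_le hv)⟩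

lemma dualObjective_le_rate (hu : u ∈ Icc 0 1) (hx : x ∈ Icc 0 1) (v : ℝ) :
    dualObjective p q u x v ≤ rate p q u x :=
  le_ciSup (bddAbove_range_dualObjective hp hq hu hx) v

lemma mixedTiltedMean_eq_of_dualObjective_eq_rate (hu : u ∈ Icc 0 1) (hx : x ∈ Icc 0 1) {v : ℝ}
    (hv : dualObjective p q u x v = rate p q u x) :
    u * tiltedMean p v + (1 - u) * tiltedMean q v = x := by
  have hmax : IsLocalMax (dualObjective p q u x) v := Eventually.of_forall fun w =>
    hv ▸ dualObjective_le_rate hp hq hu hx w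
  linarith [hmax.hasDerivAt_eq_zero (hasDerivAt_dualObjective hp hq v)]

end Rate

section Rearrangement

variable {p q a b c d : ℝ} (hp : p ∈ Ioo 0 1) (hq : q ∈ Ioo 0 1) (hqp : q < p)
  (ha : a ∈ Icc 0 1) (hb : b ∈ Icc 0 1)
include hp hq hqp ha hb

lemma rate_add_rate_le (hc : c ∈ Icc 0 1) (hd : d ∈ Icc 0 1) (hab : a ≤ b) (hcd : c ≤ d) :
    rate p q a c + rate p q b d ≤ rate p q a d + rate p q b c := by
  have had := dualObjective_le_rate hp hq ha hd
  have hbc := dualObjective_le_rate hp hq hb hc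
  refine ciSup_add_ciSup_le fun v w => ?_
  rcases le_total v w with hvw | hwv
  · have hg := (strictMono_bernoulliCGF_sub hq hp hqp).monotone hvw
    have := mul_nonpos_of_nonneg_of_nonpos (sub_nonneg.2 hab) (sub_nonpos.2 hg)
    rw [dualObjective_exchange_u]
    linarith [had w, hbc v]
  · have := mul_nonneg (sub_nonneg.2 hwv) (sub_nonneg.2 hcd)
    rw [dualObjective_exchange_x]
    linarith [had v, hbc w]

lemma rate_add_rate_lt_of_mem_Ioo (hc : c ∈ Ioo 0 1) (hd : d ∈ Ioo 0 1) (hab : a < b)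
    (hcd : c < d) : rate p q a c + rate p q b d < rate p q a d + rate p q b c := by
  obtain ⟨v, hv⟩ := exists_dualObjective_eq_rate hp hq ha hc
  obtain ⟨w, hw⟩ := exists_dualObjective_eq_rate hp hq hb hd
  have had := dualObjective_le_rate hp hq ha (Ioo_subset_Icc_self hd)
  have hbc := dualObjective_le_rate hp hq hb (Ioo_subset_Icc_self hc)
  rw [← hv, ← hw]
  rcases lt_trichotomy v w with hvw | rfl | hwv
  · have := mul_neg_of_pos_of_neg (sub_pos.2 hab)
      (sub_neg.2 (strictMono_bernoulliCGF_sub hq hp hqp hvw))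
    rw [dualObjective_exchange_u]
    linarith [had w, hbc v]
  · have hlt : dualObjective p q a d v < rate p q a d := by
      refine (had v).lt_of_ne fun h => hcd.ne ?_
      rw [← mixedTiltedMean_eq_of_dualObjective_eq_rate hp hq ha (Ioo_subset_Icc_self hc) hv,
        mixedTiltedMean_eq_of_dualObjective_eq_rate hp hq ha (Ioo_subset_Icc_self hd) h]
    rw [dualObjective_exchange_x, sub_self, zero_mul, sub_zero]
    linarith [hbc v]
  · have := mul_pos (sub_pos.2 hwv) (sub_pos.2 hcd)
    rw [dualObjective_exchange_x]
    linarith [had v, hbc w]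

lemma rate_add_rate_lt (hc : c ∈ Icc 0 1) (hd : d ∈ Icc 0 1) (hab : a < b) (hcd : c < d) :
    rate p q a c + rate p q b d < rate p q a d + rate p q b c := by
  have hc' : (2 * c + d) / 3 ∈ Ioo 0 1 := ⟨by linarith [hc.1], by linarith [hd.2]⟩
  have hd' : (c + 2 * d) / 3 ∈ Ioo 0 1 := ⟨by linarith [hc.1], by linarith [hd.2]⟩
  have h₁ := rate_add_rate_le hp hq hqp ha hb hc (Ioo_subset_Icc_self hc') hab.le
    (by linarith : c ≤ (2 * c + d) / 3)
  have h₂ := rate_add_rate_lt_of_mem_Ioo hp hq hqp ha hb hc' hd' hab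
    (by linarith : (2 * c + d) / 3 < (c + 2 * d) / 3)
  have h₃ := rate_add_rate_le hp hq hqp ha hb (Ioo_subset_Icc_self hd') hd hab.le
    (by linarith : (c + 2 * d) / 3 ≤ d)
  linarith

end Rearrangement

section TransitionProbabilities

variable {lam mu t : ℝ}

lemma I1_eq_rate (u x : ℝ) : I1 lam mu t u x = rate (p11 lam mu t) (p01 lam mu t) u x := rfl

lemma p01_lt_p11 (h : lam + mu ≠ 0) : p01 lam mu t < p11 lam mu t := by
  rw [← sub_pos, p01, p11, ← sub_div]
  convert exp_pos (-(t * (lam + mu))) using 1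
  field_simp
  ring

lemma p01_pos (hlam : 0 < lam) (hmu : 0 < mu) (ht : 0 < t) : 0 < p01 lam mu t := by
  have : exp (-(t * (lam + mu))) < 1 := exp_lt_one_iff.2 (by nlinarith)
  exact div_pos (by nlinarith) (by linarith)

lemma p11_lt_one (hlam : 0 < lam) (hmu : 0 < mu) (ht : 0 < t) : p11 lam mu t < 1 := by
  have : exp (-(t * (lam + mu))) < 1 := exp_lt_one_iff.2 (by nlinarith)
  exact (div_lt_one (by linarith)).2 (by nlinarith)

end TransitionProbabilities

/-- Strict rearrangement inequality for the one-step rate function. -/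
theorem stmt_11 (lam mu T : ℝ) (hlam : 0 < lam) (hmu : 0 < mu) (hT : 0 < T)
    (a b c d : ℝ) (ha : a ∈ Set.Icc (0:ℝ) 1) (hb : b ∈ Set.Icc (0:ℝ) 1)
    (hc : c ∈ Set.Icc (0:ℝ) 1) (hd : d ∈ Set.Icc (0:ℝ) 1)
    (hab : a < b) (hcd : c < d) :
    I1 lam mu T a c + I1 lam mu T b d < I1 lam mu T a d + I1 lam mu T b c := by
  have hlt : p01 lam mu T < p11 lam mu T := p01_lt_p11 (add_pos hlam hmu).ne'
  have hp : p11 lam mu T ∈ Ioo 0 1 := ⟨(p01_pos hlam hmu hT).trans hlt, p11_lt_one hlam hmu hT⟩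
  have hq : p01 lam mu T ∈ Ioo 0 1 := ⟨p01_pos hlam hmu hT, hlt.trans (p11_lt_one hlam hmu hT)⟩
  simp only [I1_eq_rate]
  exact rate_add_rate_lt hp hq hlt ha hb hc hd hab hcd
end
end

section
/- Let λ, μ ∈ (0,∞), T > 0, d ∈ ℕ with d ≥ 1, and let u ∈ [0,1] be a constant. Define ψ : [0,1] → ℝ by ψ(x) = I_{1,T}(u, x^{1/d}) and let ψ̂ be its convex minorant on [0,1]. Then for every graphon f, ∫_{[0,1]²} I_{1,T}(u, f(x,y)) dx dy ≥ ψ̂( ∫_{[0,1]²} f(x,y)^d dx dy ). -/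
noncomputable section

open MeasureTheory Real Filter

/-- A graphon: a measurable symmetric function with values in `[0,1]`. -/
def IsGraphon (f : ℝ → ℝ → ℝ) : Prop :=
  Measurable (Function.uncurry f) ∧ (∀ x y, f x y ∈ Set.Icc (0:ℝ) 1) ∧ ∀ x y, f x y = f y x

/-- The unit square `[0,1]²`. -/
def unitSq : Set (ℝ × ℝ) := Set.Icc (0:ℝ) 1 ×ˢ Set.Icc (0:ℝ) 1

/-- `φ` is the convex minorant of `ψ` on `[0,1]`: the largest convex function on `[0,1]`
bounded above by `ψ`. -/
def IsConvexMinorant (ψ φ : ℝ → ℝ) : Prop :=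
  ConvexOn ℝ (Set.Icc (0:ℝ) 1) φ ∧ (∀ x ∈ Set.Icc (0:ℝ) 1, φ x ≤ ψ x) ∧
  ∀ φ' : ℝ → ℝ, ConvexOn ℝ (Set.Icc (0:ℝ) 1) φ' → (∀ x ∈ Set.Icc (0:ℝ) 1, φ' x ≤ ψ x) →
    ∀ x ∈ Set.Icc (0:ℝ) 1, φ' x ≤ φ x

/-! Since `(f^d)^(1/d) = f`, pointwise `ψ̂ (f^d) ≤ ψ (f^d) = I_{1,T}(u, f)`, and the claim is
Jensen's inequality for the convex `ψ̂` on the probability space `[0,1]²`. As `ψ̂` need not be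
continuous at `0` and `1`, Jensen is proved directly: at an interior mean `m`, integrate the
supporting line at `m` whose slope is the right derivative there; at an endpoint mean, `f^d` is a.e.
constant. The right-hand side is an honest integral: on `[0,1]`, `I_{1,T}(u, ·)` takes values in
`[0, C]` because `J_{T,v}(u) ≥ max v 0 - C`, and it is measurable as a supremum over rational `v`,
by continuity in `v`. -/

open Set

namespace ConvexOn

variable {S : Set ℝ} {φ : ℝ → ℝ} {x y : ℝ}

lemma add_rightDeriv_mul_sub_le (hφ : ConvexOn ℝ S φ) (hx : x ∈ interior S) (hy : y ∈ S) :
    φ x + derivWithin φ (Ioi x) x * (y - x) ≤ φ y := by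
  rcases lt_trichotomy y x with hyx | rfl | hxy
  · have h := (hφ.slope_le_leftDeriv_of_mem_interior hy hx hyx).trans
      (hφ.leftDeriv_le_rightDeriv_of_mem_interior hx)
    rw [slope_def_field, div_le_iff₀ (sub_pos.2 hyx)] at h
    linarith
  · simp
  · have h := hφ.rightDeriv_le_slope_of_mem_interior hx hy hxy
    rw [slope_def_field, le_div_iff₀ (sub_pos.2 hxy)] at h
    linarith

variable {α : Type*} [MeasurableSpace α] {μ : Measure α} [IsProbabilityMeasure μ]

lemma map_integral_le_integral_of_le {a b : ℝ} (hφ : ConvexOn ℝ (Icc a b) φ) {g h : α → ℝ}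
    (hg : Integrable g μ) (hgab : ∀ᵐ ω ∂μ, g ω ∈ Icc a b) (hh : Integrable h μ)
    (hφh : ∀ᵐ ω ∂μ, φ (g ω) ≤ h ω) : φ (∫ ω, g ω ∂μ) ≤ ∫ ω, h ω ∂μ := by
  have hm : ∫ ω, g ω ∂μ ∈ Icc a b := (convex_Icc a b).integral_mem isClosed_Icc hgab hg
  have of_ae_eq_const : ∀ c, (fun _ => c) =ᵐ[μ] g → φ (∫ ω, g ω ∂μ) ≤ ∫ ω, h ω ∂μ := by
    intro c hc
    rw [← integral_congr_ae hc]
    calc φ (∫ _, c ∂μ) = ∫ _, φ c ∂μ := by simp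
      _ ≤ ∫ ω, h ω ∂μ := integral_mono_ae (integrable_const _) hh ?_
    filter_upwards [hc, hφh] with ω hω hωh
    rwa [hω]
  rcases hm.1.eq_or_lt with ha | ha
  · refine of_ae_eq_const a ((integral_eq_iff_of_ae_le (integrable_const a) hg ?_).1 ?_)
    · filter_upwards [hgab] with ω hω using hω.1
    · simpa using ha
  rcases hm.2.eq_or_lt with hb | hb
  · refine of_ae_eq_const b ((integral_eq_iff_of_ae_le hg (integrable_const b) ?_).1 ?_).symm
    · filter_upwards [hgab] with ω hω using hω.2
    · simpa using hb
  have hmi : ∫ ω, g ω ∂μ ∈ interior (Icc a b) := by rw [interior_Icc]; exact ⟨ha, hb⟩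
  set m := ∫ ω, g ω ∂μ
  set c := derivWithin φ (Ioi m) m
  have hline : Integrable (fun ω => c * (g ω - m)) μ := (hg.sub (integrable_const m)).const_mul c
  calc φ m = ∫ ω, (φ m + c * (g ω - m)) ∂μ := by
        rw [integral_add (integrable_const _) hline, integral_const_mul,
          integral_sub hg (integrable_const m)]
        simp [m]
    _ ≤ ∫ ω, h ω ∂μ := by
        refine integral_mono_ae ((integrable_const _).add hline) hh ?_
        filter_upwards [hgab, hφh] with ω hω hωh
        exact (hφ.add_rightDeriv_mul_sub_le hmi hω).trans hωh

end ConvexOn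

lemma max_zero_add_min_log_le_log {p : ℝ} (hp0 : 0 < p) (hp1 : p < 1) (v : ℝ) :
    max v 0 + min (log p) (log (1 - p)) ≤ log (1 - p + exp v * p) := by
  have hev := exp_pos v
  rcases le_total v 0 with hv | hv
  · rw [max_eq_right hv, zero_add]
    exact (min_le_right _ _).trans (log_le_log (by linarith) (by nlinarith))
  · rw [max_eq_left hv]
    calc v + min (log p) (log (1 - p)) ≤ log (exp v) + log p := by
          rw [log_exp]; linarith [min_le_left (log p) (log (1 - p))]
      _ = log (exp v * p) := (log_mul hev.ne' hp0.ne').symm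
      _ ≤ log (1 - p + exp v * p) := log_le_log (by positivity) (by linarith)

section RateFunction

variable {lam mu t u : ℝ}

lemma p01_mem_Ioo (hlam : 0 < lam) (hmu : 0 < mu) (ht : 0 < t) : p01 lam mu t ∈ Ioo 0 1 := by
  have hE : exp (-(t * (lam + mu))) < 1 := exp_lt_one_iff.2 (by nlinarith)
  have hE0 := exp_pos (-(t * (lam + mu)))
  rw [p01, mem_Ioo, div_lt_one (by linarith)]
  exact ⟨div_pos (by nlinarith) (by linarith), by nlinarith⟩

lemma p11_mem_Ioo (hlam : 0 < lam) (hmu : 0 < mu) (ht : 0 < t) : p11 lam mu t ∈ Ioo 0 1 := by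
  have hE : exp (-(t * (lam + mu))) < 1 := exp_lt_one_iff.2 (by nlinarith)
  have hE0 := exp_pos (-(t * (lam + mu)))
  rw [p11, mem_Ioo, div_lt_one (by linarith)]
  exact ⟨div_pos (by nlinarith) (by linarith), by nlinarith⟩

variable (hlam : 0 < lam) (hmu : 0 < mu) (ht : 0 < t)
include hlam hmu ht

lemma continuous_Jfun : Continuous fun v => Jfun lam mu t v u := by
  have hlog : ∀ p ∈ Ioo (0 : ℝ) 1, Continuous fun v => log (1 - p + exp v * p) := by
    intro p hp
    refine Continuous.log (by fun_prop) fun v => ?_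
    nlinarith [exp_pos v, hp.1, hp.2]
  unfold Jfun
  have := hlog _ (p11_mem_Ioo hlam hmu ht)
  have := hlog _ (p01_mem_Ioo hlam hmu ht)
  fun_prop

variable (hu : u ∈ Icc (0 : ℝ) 1)
include hu

lemma exists_forall_mul_sub_Jfun_le :
    ∃ C, ∀ x ∈ Icc (0 : ℝ) 1, ∀ v, v * x - Jfun lam mu t v u ≤ C := by
  obtain ⟨h11, h11'⟩ := p11_mem_Ioo hlam hmu ht
  obtain ⟨h01, h01'⟩ := p01_mem_Ioo hlam hmu ht
  set K11 := min (log (p11 lam mu t)) (log (1 - p11 lam mu t))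
  set K01 := min (log (p01 lam mu t)) (log (1 - p01 lam mu t))
  refine ⟨-(u * K11 + (1 - u) * K01), fun x hx v => ?_⟩
  have hJ : max v 0 + (u * K11 + (1 - u) * K01) ≤ Jfun lam mu t v u := by
    have h1 := max_zero_add_min_log_le_log h11 h11' v
    have h0 := max_zero_add_min_log_le_log h01 h01' v
    have := add_le_add (mul_le_mul_of_nonneg_left h1 hu.1)
      (mul_le_mul_of_nonneg_left h0 (sub_nonneg.2 hu.2))
    unfold Jfun
    linarith
  have hvx : v * x ≤ max v 0 := by
    rcases le_total v 0 with hv | hv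
    · nlinarith [le_max_right v 0, hx.1]
    · nlinarith [le_max_left v 0, hx.2]
  linarith

lemma bddAbove_range_mul_sub_Jfun {x : ℝ} (hx : x ∈ Icc (0 : ℝ) 1) :
    BddAbove (range fun v => v * x - Jfun lam mu t v u) := by
  obtain ⟨C, hC⟩ := exists_forall_mul_sub_Jfun_le hlam hmu ht hu
  exact ⟨C, forall_mem_range.2 (hC x hx)⟩

lemma I1_nonneg {x : ℝ} (hx : x ∈ Icc (0 : ℝ) 1) : 0 ≤ I1 lam mu t u x :=
  le_ciSup_of_le (bddAbove_range_mul_sub_Jfun hlam hmu ht hu hx) 0 (by simp [Jfun])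

lemma exists_forall_I1_le : ∃ C, ∀ x ∈ Icc (0 : ℝ) 1, I1 lam mu t u x ≤ C := by
  obtain ⟨C, hC⟩ := exists_forall_mul_sub_Jfun_le hlam hmu ht hu
  exact ⟨C, fun x hx => ciSup_le (hC x hx)⟩

lemma I1_eq_iSup_range_ratCast {x : ℝ} (hx : x ∈ Icc (0 : ℝ) 1) :
    I1 lam mu t u x = ⨆ v : range ((↑) : ℚ → ℝ), ((v : ℝ) * x - Jfun lam mu t v u) :=
  (Rat.denseRange_cast.ciSup ((continuous_id.mul continuous_const).sub
    (continuous_Jfun hlam hmu ht)) (bddAbove_range_mul_sub_Jfun hlam hmu ht hu hx)).symm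

variable {α : Type*} [MeasurableSpace α] {F : α → ℝ} (hF : Measurable F)
  (hF01 : ∀ a, F a ∈ Icc (0 : ℝ) 1)
include hF hF01

lemma measurable_I1_comp : Measurable fun a => I1 lam mu t u (F a) := by
  have : Countable (range ((↑) : ℚ → ℝ)) := (countable_range _).to_subtype
  simp_rw [I1_eq_iSup_range_ratCast hlam hmu ht hu (hF01 _)]
  exact .iSup fun v => (hF.const_mul _).sub measurable_const

lemma integrable_I1_comp (μ : Measure α) [IsFiniteMeasure μ] :
    Integrable (fun a => I1 lam mu t u (F a)) μ := by
  obtain ⟨C, hC⟩ := exists_forall_I1_le hlam hmu ht hu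
  exact .of_mem_Icc 0 C (measurable_I1_comp hlam hmu ht hu hF hF01).aemeasurable
    (ae_of_all _ fun a => ⟨I1_nonneg hlam hmu ht hu (hF01 a), hC _ (hF01 a)⟩)

end RateFunction

instance : IsProbabilityMeasure (volume.restrict unitSq) := by
  constructor
  rw [Measure.restrict_apply_univ, unitSq, Measure.volume_eq_prod, Measure.prod_prod,
    Real.volume_Icc]
  norm_num

/-- Jensen-type lower bound via the convex minorant of `x ↦ I_{1,T}(u, x^{1/d})`. -/
theorem stmt_14 (lam mu T : ℝ) (hlam : 0 < lam) (hmu : 0 < mu) (hT : 0 < T)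
    (d : ℕ) (hd : 1 ≤ d) (u : ℝ) (hu : u ∈ Set.Icc (0:ℝ) 1)
    (psihat : ℝ → ℝ)
    (hmin : IsConvexMinorant (fun x => I1 lam mu T u (x ^ (1 / (d:ℝ)))) psihat)
    (f : ℝ → ℝ → ℝ) (hf : IsGraphon f) :
    psihat (∫ p in unitSq, (f p.1 p.2) ^ d) ≤ ∫ p in unitSq, I1 lam mu T u (f p.1 p.2) := by
  obtain ⟨hconv, hle, -⟩ := hmin
  obtain ⟨hmeas, hmem, -⟩ := hf
  have hfd : ∀ p : ℝ × ℝ, f p.1 p.2 ^ d ∈ Icc (0 : ℝ) 1 := fun p =>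
    ⟨pow_nonneg (hmem _ _).1 d, pow_le_one₀ (hmem _ _).1 (hmem _ _).2⟩
  refine hconv.map_integral_le_integral_of_le
    (.of_mem_Icc 0 1 (hmeas.pow_const d).aemeasurable (ae_of_all _ hfd)) (ae_of_all _ hfd)
    (integrable_I1_comp hlam hmu hT hu hmeas (fun p => hmem p.1 p.2) _) (ae_of_all _ fun p => ?_)
  calc psihat (f p.1 p.2 ^ d) ≤ I1 lam mu T u ((f p.1 p.2 ^ d) ^ (1 / (d : ℝ))) := hle _ (hfd p)
    _ = I1 lam mu T u (f p.1 p.2) := by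
      rw [one_div, pow_rpow_inv_natCast (hmem _ _).1 (by omega)]
end
end
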